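/- For all positive integers n, ODP(Tour_n, Cycle_n)/(1−x)^n = n Σ_{m≥0} m^{n−1} x^m (with the convention 0^0 = 1); equivalently, the cyclic Eulerian polynomial C_n(x) = Σ_{σ ∈ S_n} x^{cdes(σ)} satisfies C_n(x)/(1−x)^n = n Σ_{m≥0} m^{n−1} x^m. -/

import Mathlib

noncomputable def desc (n : ℕ) (σ : Equiv.Perm (Fin n)) : ℕ :=
  Nat.card {i : Fin n // ∃ h : i.val + 1 < n, σ ⟨i.val + 1, h⟩ < σ i}

noncomputable def exce (n : ℕ) (σ : Equiv.Perm (Fin n)) : ℕ :=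
  Nat.card {i : Fin n // i < σ i}

def cyclicSucc {n : ℕ} (i : Fin n) : Fin n := ⟨(i.val + 1) % n, Nat.mod_lt _ i.pos⟩

noncomputable def cdes (n : ℕ) (σ : Equiv.Perm (Fin n)) : ℕ :=
  Nat.card {i : Fin n // σ (cyclicSucc i) < σ i}

def dfsAdj {α β : Type*} [DecidableEq α] (X : α → α → Prop) (Y : β → β → Prop) (σ φ : α ≃ β) : Prop :=
  ∃ a b, X a b ∧ Y (σ a) (σ b) ∧ φ = (Equiv.swap a b).trans σ

noncomputable def outdeg {α β : Type*} [DecidableEq α] (X : α → α → Prop) (Y : β → β → Prop) (σ : α ≃ β) : ℕ :=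
  Nat.card {φ : α ≃ β // dfsAdj X Y σ φ}

noncomputable def ODP {α β : Type*} [Fintype α] [Fintype β] [DecidableEq α] [DecidableEq β]
    (X : α → α → Prop) (Y : β → β → Prop) : Polynomial ℤ :=
  ∑ σ : α ≃ β, Polynomial.X ^ outdeg X Y σ

open scoped Classical in
noncomputable def ODPc {α β : Type*} [Fintype α] [Fintype β] [DecidableEq α] [DecidableEq β]
    (X : α → α → Prop) (Y : β → β → Prop) (P : (α ≃ β) → Prop) : Polynomial ℤ :=
  ∑ σ : α ≃ β, if P σ then Polynomial.X ^ outdeg X Y σ else 0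

def Tour (n : ℕ) : Fin n → Fin n → Prop := fun i j => j < i
def DPath (n : ℕ) : Fin n → Fin n → Prop := fun i j => j.val = i.val + 1
def DCycle (n : ℕ) : Fin n → Fin n → Prop := fun i j => j = cyclicSucc i

def isPEO {n : ℕ} (R : Fin n → Fin n → Prop) : Prop :=
  (∀ i j, R i j → j < i) ∧ ∀ i j, R i j → ∀ a b : Fin n, j ≤ a → a < b → b ≤ i → R b a

def dirChordal {n : ℕ} (R : Fin n → Fin n → Prop) : Prop :=
  ∃ e : Equiv.Perm (Fin n), isPEO fun u v => R (e u) (e v)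

def chordal {V : Type*} (G : SimpleGraph V) : Prop :=
  ∀ m : ℕ, 4 ≤ m → ∀ f : ZMod m → V, Function.Injective f →
    (∀ i, G.Adj (f i) (f (i + 1))) →
    ∃ i j : ZMod m, i ≠ j ∧ j ≠ i + 1 ∧ i ≠ j + 1 ∧ G.Adj (f i) (f j)



/-!
The out-neighbours of σ in DFS(Tour_n, Cycle_n) are the σ ∘ (a b) with b = σ⁻¹(σ a + 1) < a,
one for each such a, so outdeg σ = cdes σ⁻¹ and ODP is the cyclic Eulerian polynomial C_n. Multiplying by (1 - x)^{-n} = Σ_j binom(n - 1 + j, n - 1) x^j, the claim becomes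
Σ_σ binom(n - 1 + m - cdes σ, n - 1) = n m^{n-1} for every m. Writing σ as a rotation of the
word (n, τ 1, …, τ (n-1)) splits S_n as (rotation) × S_{n-1} with cdes σ = des τ + 1, which
reduces this to Worpitzky's identity Σ_τ binom(m + N - 1 - des τ, N) = m^N. Worpitzky's identity
is proved by sorting: f : [N] → [m] is sorted by τ iff i ↦ f (τ i) + #{ascents of τ before i}
is strictly increasing, and these are the N-subsets of [m + asc τ].
-/

open Finset

theorem outdeg_eq_card_of_functional {α β : Type*} [DecidableEq α] (X : α → α → Prop)
    (g : β → β) (hX : ∀ a b, X a b → ¬ X b a) (σ : α ≃ β) :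
    outdeg X (fun u v => v = g u) σ = Nat.card {a // X a (σ.symm (g (σ a)))} := by
  refine (Nat.card_congr (Equiv.ofBijective
    (fun a => ⟨(Equiv.swap a.1 (σ.symm (g (σ a.1)))).trans σ, _, _, a.2, by simp, rfl⟩)
    ⟨?_, ?_⟩)).symm
  · rintro ⟨a, ha⟩ ⟨a', ha'⟩ h
    have hswap := congrArg (fun φ : α ≃ β => σ.symm (φ a)) (congrArg Subtype.val h)
    simp only [Equiv.trans_apply, Equiv.symm_apply_apply, Equiv.swap_apply_left] at hswap
    rw [Subtype.mk.injEq]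
    clear h
    generalize σ.symm (g (σ a)) = b at ha hswap
    generalize σ.symm (g (σ a')) = b' at ha' hswap
    rw [Equiv.swap_apply_def] at hswap
    split_ifs at hswap with h_eq h_eq'
    · exact h_eq
    · subst h_eq' hswap
      exact absurd ha' (hX _ _ ha)
    · subst hswap
      exact absurd ha (hX _ _ ha)
  · rintro ⟨_, a, b, hab, hb, rfl⟩
    obtain rfl : b = σ.symm (g (σ a)) := by simp [← hb]
    exact ⟨⟨a, hab⟩, rfl⟩

noncomputable def cyclicEulerian (n : ℕ) : Polynomial ℤ :=
  ∑ σ : Equiv.Perm (Fin n), Polynomial.X ^ cdes n σ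

theorem outdeg_tour_dcycle {n : ℕ} (σ : Fin n ≃ Fin n) :
    outdeg (Tour n) (DCycle n) σ = cdes n σ.symm := by
  rw [show DCycle n = fun i j => j = cyclicSucc i from rfl,
    outdeg_eq_card_of_functional (Tour n) _ (fun _ _ h h' => lt_asymm h h'), cdes]
  exact Nat.card_congr (σ.subtypeEquiv fun a => by simp [Tour])

theorem odp_tour_dcycle (n : ℕ) : ODP (Tour n) (DCycle n) = cyclicEulerian n := by
  simp only [ODP, cyclicEulerian, outdeg_tour_dcycle]
  exact Fintype.sum_equiv (Equiv.inv _) _ _ fun _ => rfl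

theorem card_strictMono_fin (k R : ℕ) :
    Nat.card {e : Fin k → Fin R // StrictMono e} = R.choose k := by
  let toFinset : {e : Fin k → Fin R // StrictMono e} ≃ {s : Finset (Fin R) // #s = k} :=
    { toFun := fun e => ⟨univ.image e.1, by
        rw [card_image_of_injective _ e.2.injective, card_univ, Fintype.card_fin]⟩
      invFun := fun s => ⟨s.1.orderEmbOfFin s.2, (s.1.orderEmbOfFin s.2).strictMono⟩
      left_inv := fun ⟨e, he⟩ => Subtype.ext
        (orderEmbOfFin_unique _ (fun i => mem_image_of_mem _ (mem_univ i)) he).symm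
      right_inv := fun ⟨s, hs⟩ => Subtype.ext <| by
        rw [← coe_inj, coe_image, coe_univ, Set.image_univ, range_orderEmbOfFin] }
  rw [Nat.card_congr toFinset, Nat.card_eq_fintype_card, Fintype.card_finset_len,
    Fintype.card_fin]

section Worpitzky

variable {n : ℕ} (τ : Equiv.Perm (Fin (n + 1)))

theorem desc_succ_eq_sum :
    desc (n + 1) τ = ∑ i : Fin n, if τ i.succ < τ i.castSucc then 1 else 0 := by
  rw [desc, Nat.card_eq_fintype_card, Fintype.card_subtype, card_filter, Fin.sum_univ_castSucc]
  simp [Fin.succ, Fin.castSucc]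

def ascentShift : Fin (n + 1) → ℕ :=
  Fin.partialSum fun i => if τ i.castSucc < τ i.succ then 1 else 0

theorem ascentShift_succ (i : Fin n) :
    ascentShift τ i.succ = ascentShift τ i.castSucc + if τ i.castSucc < τ i.succ then 1 else 0 :=
  Fin.partialSum_succ _ _

theorem ascentShift_last_add_desc : ascentShift τ (Fin.last n) + desc (n + 1) τ = n := by
  rw [desc_succ_eq_sum, ascentShift, Fin.partialSum, Fin.val_last,
    List.take_of_length_le (by simp), List.sum_ofFn, ← sum_add_distrib]
  calc _ = ∑ _i : Fin n, 1 := sum_congr rfl fun i _ => by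
        rcases lt_or_gt_of_ne (τ.injective.ne (Fin.castSucc_lt_succ (i := i)).ne) with h | h <;>
          simp [h, h.asymm]
    _ = n := by simp

theorem ascentShift_le_of_strictMono {e : Fin (n + 1) → ℕ} (he : StrictMono e)
    (i : Fin (n + 1)) : ascentShift τ i ≤ e i := by
  induction i using Fin.induction with
  | zero => simp [ascentShift]
  | succ i ih =>
    have := he (Fin.castSucc_lt_succ (i := i))
    rw [ascentShift_succ]
    split_ifs <;> omega

theorem sub_ascentShift_lt {x : ℕ} {e : Fin (n + 1) → Fin (x + ascentShift τ (Fin.last n))}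
    (he : StrictMono e) (i : Fin (n + 1)) : e i - ascentShift τ i < x := by
  have he' : StrictMono fun i => (e i : ℕ) := Fin.val_strictMono.comp he
  have h_mono : Monotone fun i => (e i : ℕ) - ascentShift τ i := by
    refine Fin.monotone_iff_le_succ.2 fun i => ?_
    have : (e i.castSucc : ℕ) < e i.succ := he (Fin.castSucc_lt_succ (i := i))
    have := ascentShift_le_of_strictMono τ he' i.castSucc
    simp only [ascentShift_succ]
    split_ifs <;> omega
  have : (e i : ℕ) - ascentShift τ i ≤ e (Fin.last n) - ascentShift τ (Fin.last n) :=
    h_mono (Fin.le_last i)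
  have := ascentShift_le_of_strictMono τ he' (Fin.last n)
  omega

/-- `Tuple.sort` breaks ties by position, so at an ascent of `τ` the values of `f ∘ τ` may
stay equal while at a descent they must increase. -/
theorem sort_eq_iff_strictMono {x : ℕ} (f : Fin (n + 1) → Fin x) :
    Tuple.sort f = τ ↔ StrictMono fun i => (f (τ i) : ℕ) + ascentShift τ i := by
  rw [eq_comm, Tuple.eq_sort_iff', Fin.strictMono_iff_lt_succ, Fin.strictMono_iff_lt_succ]
  refine forall_congr' fun i => ?_
  have hne : τ i.castSucc ≠ τ i.succ := τ.injective.ne (Fin.castSucc_lt_succ (i := i)).ne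
  show toLex (f (τ i.castSucc), τ i.castSucc) < toLex (f (τ i.succ), τ i.succ) ↔ _
  rw [Prod.Lex.toLex_lt_toLex, ascentShift_succ, Fin.lt_def, Fin.ext_iff]
  rcases lt_or_gt_of_ne hne with h | h
  · simp only [h, and_true, if_true]
    omega
  · simp [h.asymm]

def sortFiberEquiv (x : ℕ) :
    {f : Fin (n + 1) → Fin x // Tuple.sort f = τ} ≃
      {e : Fin (n + 1) → Fin (x + ascentShift τ (Fin.last n)) // StrictMono e} where
  toFun f := ⟨fun i => ⟨f.1 (τ i) + ascentShift τ i, by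
      have := ((sort_eq_iff_strictMono τ f.1).1 f.2).monotone (Fin.le_last i)
      omega⟩,
    (sort_eq_iff_strictMono τ f.1).1 f.2⟩
  invFun e := ⟨fun v => ⟨e.1 (τ.symm v) - ascentShift τ (τ.symm v),
      sub_ascentShift_lt τ e.2 (τ.symm v)⟩, by
    rw [sort_eq_iff_strictMono]
    convert Fin.val_strictMono.comp e.2 using 2 with i
    have := ascentShift_le_of_strictMono τ (Fin.val_strictMono.comp e.2) i
    simp only [Equiv.symm_apply_apply, Function.comp_apply] at this ⊢
    omega⟩
  left_inv f := by ext v; simp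
  right_inv e := by
    ext i
    have := ascentShift_le_of_strictMono τ (Fin.val_strictMono.comp e.2) i
    simp only [Equiv.symm_apply_apply, Function.comp_apply] at this ⊢
    omega

theorem card_sort_fiber (x : ℕ) :
    Nat.card {f : Fin (n + 1) → Fin x // Tuple.sort f = τ} =
      (x + n - desc (n + 1) τ).choose (n + 1) := by
  rw [Nat.card_congr (sortFiberEquiv τ x), card_strictMono_fin]
  have := ascentShift_last_add_desc τ
  congr 1
  omega

end Worpitzky

theorem sum_choose_add_sub_desc (x n : ℕ) :
    ∑ τ : Equiv.Perm (Fin (n + 1)), (x + n - desc (n + 1) τ).choose (n + 1) = x ^ (n + 1) := by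
  classical
  calc _ = ∑ τ : Equiv.Perm (Fin (n + 1)), #{f : Fin (n + 1) → Fin x | Tuple.sort f = τ} := by
        simp_rw [← card_sort_fiber, Nat.card_eq_fintype_card, Fintype.card_subtype]
    _ = x ^ (n + 1) := by
        rw [← card_eq_sum_card_fiberwise (fun _ _ => mem_univ _), card_univ]
        simp

section Rotation

variable {n : ℕ}

theorem cyclicSucc_eq_add_one (i : Fin (n + 1)) : cyclicSucc i = i + 1 := by
  ext
  simp [cyclicSucc, Fin.val_add]

theorem cdes_subRight_trans (σ : Equiv.Perm (Fin (n + 1))) (k : Fin (n + 1)) :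
    cdes (n + 1) ((Equiv.subRight k).trans σ) = cdes (n + 1) σ :=
  Nat.card_congr <| (Equiv.subRight k).subtypeEquiv fun i => by
    simp [cyclicSucc_eq_add_one, sub_add_eq_add_sub]

def consLast (τ : Equiv.Perm (Fin n)) : Equiv.Perm (Fin (n + 1)) :=
  (finSuccEquiv n).trans ((Equiv.optionCongr τ).trans finSuccEquivLast.symm)

@[simp]
theorem consLast_zero (τ : Equiv.Perm (Fin n)) : consLast τ 0 = Fin.last n := by
  simp [consLast]

@[simp]
theorem consLast_succ (τ : Equiv.Perm (Fin n)) (i : Fin n) :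
    consLast τ i.succ = (τ i).castSucc := by
  simp [consLast]

theorem consLast_injective : Function.Injective (consLast (n := n)) := fun τ τ' h =>
  Equiv.ext fun i => Fin.castSucc_injective _ <| by rw [← consLast_succ, h, consLast_succ]

theorem cdes_consLast (τ : Equiv.Perm (Fin (n + 1))) :
    cdes (n + 2) (consLast τ) = desc (n + 1) τ + 1 := by
  rw [cdes, Nat.card_eq_fintype_card, Fintype.card_subtype, card_filter, Fin.sum_univ_succ,
    Fin.sum_univ_castSucc, desc_succ_eq_sum]
  have h_zero : cyclicSucc (0 : Fin (n + 2)) = Fin.succ 0 := by ext; simp [cyclicSucc]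
  have h_castSucc (i : Fin n) : cyclicSucc i.castSucc.succ = i.succ.succ := by
    ext; simp [cyclicSucc, Nat.mod_eq_of_lt]
  have h_last : cyclicSucc (Fin.last n).succ = 0 := by ext; simp [cyclicSucc]
  simp only [h_zero, h_castSucc, h_last, consLast_succ, consLast_zero]
  simp [Fin.castSucc_lt_last, not_lt_of_ge (Fin.le_last _), add_comm]

def rotatedConsLast (p : Fin (n + 1) × Equiv.Perm (Fin n)) : Equiv.Perm (Fin (n + 1)) :=
  (Equiv.subRight p.1).trans (consLast p.2)

theorem rotatedConsLast_bijective : Function.Bijective (rotatedConsLast (n := n)) := by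
  refine (Fintype.bijective_iff_injective_and_card _).2
    ⟨?_, by simp [Fintype.card_perm, Nat.factorial_succ]⟩
  rintro ⟨k, τ⟩ ⟨k', τ'⟩ h
  have h_last (k : Fin (n + 1)) τ : rotatedConsLast (k, τ) k = Fin.last n := by
    simp [rotatedConsLast]
  obtain rfl : k = k' := (rotatedConsLast (k', τ')).injective (by rw [h_last, ← h, h_last])
  have : consLast τ = consLast τ' := Equiv.ext fun i => by
    simpa [rotatedConsLast] using DFunLike.congr_fun h (i + k)
  rw [consLast_injective this]

end Rotation

theorem cdes_one (σ : Equiv.Perm (Fin 1)) : cdes 1 σ = 0 := by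
  have : IsEmpty {i : Fin 1 // σ (cyclicSucc i) < σ i} :=
    ⟨fun ⟨_, h⟩ => h.ne (congrArg σ (Subsingleton.elim _ _))⟩
  exact Nat.card_of_isEmpty

theorem sum_choose_cdes (N m : ℕ) :
    ∑ σ : Equiv.Perm (Fin (N + 1)),
      (if cdes (N + 1) σ ≤ m then (N + (m - cdes (N + 1) σ)).choose N else 0) =
        (N + 1) * m ^ N := by
  rcases N with _ | n
  · simp [cdes_one]
  · rw [← rotatedConsLast_bijective.sum_comp, Fintype.sum_prod_type]
    simp only [rotatedConsLast, cdes_subRight_trans, cdes_consLast]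
    calc _ = ∑ _k : Fin (n + 2), ∑ τ : Equiv.Perm (Fin (n + 1)),
          (m + n - desc (n + 1) τ).choose (n + 1) := by
          refine sum_congr rfl fun _ _ => sum_congr rfl fun τ _ => ?_
          split_ifs with h
          · congr 1; omega
          · rw [Nat.choose_eq_zero_of_lt (by omega)]
      _ = _ := by simp [sum_choose_add_sub_desc]

theorem coe_cyclicEulerian (N : ℕ) :
    (cyclicEulerian (N + 1) : PowerSeries ℤ) = (1 - PowerSeries.X) ^ (N + 1) *
      (((N + 1 : ℕ) : PowerSeries ℤ) * PowerSeries.mk fun m => (m : ℤ) ^ N) := by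
  set B : PowerSeries ℤ := PowerSeries.mk fun j => ((N + j).choose N : ℤ)
  have hmul : (cyclicEulerian (N + 1) : PowerSeries ℤ) * B =
      ((N + 1 : ℕ) : PowerSeries ℤ) * PowerSeries.mk fun m => (m : ℤ) ^ N := by
    ext m
    rw [cyclicEulerian, ← Polynomial.coeToPowerSeries.ringHom_apply, map_sum, sum_mul, map_sum,
      ← nsmul_eq_mul, map_nsmul, PowerSeries.coeff_mk, nsmul_eq_mul]
    simp only [map_pow, Polynomial.coeToPowerSeries.ringHom_apply, Polynomial.coe_X,
      PowerSeries.coeff_X_pow_mul', B, PowerSeries.coeff_mk]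
    exact_mod_cast sum_choose_cdes N m
  calc (cyclicEulerian (N + 1) : PowerSeries ℤ)
      = (cyclicEulerian (N + 1) : PowerSeries ℤ) * (B * (1 - PowerSeries.X) ^ (N + 1)) := by
        rw [PowerSeries.mk_add_choose_mul_one_sub_pow_eq_one, mul_one]
    _ = _ := by rw [← hmul]; ring

theorem odp_tour_cycle (n : ℕ) (hn : 0 < n) :
    ODP (Tour n) (DCycle n) = (∑ σ : Equiv.Perm (Fin n), Polynomial.X ^ cdes n σ) ∧
      ((ODP (Tour n) (DCycle n) : Polynomial ℤ) : PowerSeries ℤ) =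
        (1 - PowerSeries.X) ^ n *
          ((n : PowerSeries ℤ) * PowerSeries.mk (fun m => (m : ℤ) ^ (n - 1))) := by
  obtain ⟨N, rfl⟩ : ∃ N, n = N + 1 := ⟨n - 1, (Nat.succ_pred_eq_of_pos hn).symm⟩
  rw [odp_tour_dcycle]
  exact ⟨rfl, coe_cyclicEulerian N⟩
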